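/- Let F be the free group on a finite set S and let X be a connected graph with oriented S-labelled edges such that each vertex has exactly one incoming and one outgoing s-labelled edge for each s ∈ S. Fix a basepoint b and a function Ψ assigning to each edge e of X an element Ψ(e) of a group G. Define φ_ε(f), for f ∈ F represented by a word s_1^{k_1}⋯s_n^{k_n} (k_j ∈ {±1}), by following the unique edge path e_1^{k_1}⋯e_n^{k_n} from b and setting φ_ε(f) = Ψ(e_1)^{k_1}⋯Ψ(e_n)^{k_n}. Then φ_ε(f) is well-defined: it does not depend on the choice of word representing f. -/

import Mathlib

/-- The product of edge labels along the unique edge path starting at `v` reading a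
word in `S ∪ S⁻¹`.  The graph has vertex set `V`; for each `s ∈ S` the `s`-labelled
edges form a permutation `σ s` of `V` (unique outgoing and incoming `s`-edge at each
vertex), and `Ψ v s ∈ G` is the label of the `s`-edge starting at `v`.  Traversing an
edge backwards contributes the inverse label. -/
def wordProd {V S G : Type*} [Group G] (σ : S → Equiv.Perm V) (Ψ : V → S → G) :
    V → List (S × Bool) → G
  | _, [] => 1
  | v, (s, true) :: w => Ψ v s * wordProd σ Ψ (σ s v) w
  | v, (s, false) :: w => (Ψ ((σ s)⁻¹ v) s)⁻¹ * wordProd σ Ψ ((σ s)⁻¹ v) w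

/-!
A reduction step `u ++ (s, b) :: (s, !b) :: v ⟶ u ++ v` deletes a traversal of one edge
immediately followed by its reverse; by the unique-edge condition the path comes
back to the same vertex and the two labels `Ψ(e)^{±1}` cancel. Two words representing the
same element of the free group have a common reduct, which gives the theorem.
-/

section WordProd

variable {V S G : Type*} [Group G] (σ : S → Equiv.Perm V) (Ψ : V → S → G)

def pathEnd : V → List (S × Bool) → V
  | v, [] => v
  | v, (s, true) :: w => pathEnd (σ s v) w
  | v, (s, false) :: w => pathEnd ((σ s)⁻¹ v) w

theorem wordProd_append (w₁ w₂ : List (S × Bool)) (v : V) :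
    wordProd σ Ψ v (w₁ ++ w₂) = wordProd σ Ψ v w₁ * wordProd σ Ψ (pathEnd σ v w₁) w₂ := by
  induction w₁ generalizing v with
  | nil => simp [wordProd, pathEnd]
  | cons a w ih =>
    obtain ⟨s, _ | _⟩ := a <;> simp [wordProd, pathEnd, ih, mul_assoc]

theorem wordProd_backtrack (v : V) (s : S) (b : Bool) (w : List (S × Bool)) :
    wordProd σ Ψ v ((s, b) :: (s, !b) :: w) = wordProd σ Ψ v w := by
  cases b <;> simp [wordProd, Equiv.Perm.inv_def]

theorem wordProd_eq_of_red_step {w₁ w₂ : List (S × Bool)} (h : FreeGroup.Red.Step w₁ w₂)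
    (v : V) : wordProd σ Ψ v w₁ = wordProd σ Ψ v w₂ := by
  obtain ⟨⟩ := h
  rw [wordProd_append, wordProd_append, wordProd_backtrack]

theorem wordProd_eq_of_red {w₁ w₂ : List (S × Bool)} (h : FreeGroup.Red w₁ w₂) (v : V) :
    wordProd σ Ψ v w₁ = wordProd σ Ψ v w₂ := by
  induction h with
  | refl => rfl
  | tail _ hstep ih => exact ih.trans (wordProd_eq_of_red_step σ Ψ hstep v)

end WordProd

/-- Well-definedness of `φ_ε`: the product of edge labels along the edge path from the
basepoint `b` determined by a word depends only on the element of the free group `F(S)`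
that the word represents. -/
theorem stmt_17 {V S G : Type*} [Group G] (σ : S → Equiv.Perm V) (Ψ : V → S → G)
    (b : V) (w₁ w₂ : List (S × Bool))
    (h : FreeGroup.mk w₁ = FreeGroup.mk w₂) :
    wordProd σ Ψ b w₁ = wordProd σ Ψ b w₂ := by
  obtain ⟨w, h₁, h₂⟩ := FreeGroup.Red.exact.mp h
  exact (wordProd_eq_of_red σ Ψ h₁ b).trans (wordProd_eq_of_red σ Ψ h₂ b).symm
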